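/- arXiv:1705.08342 — 3 statements merged into one kernel-verified Lean document; each statement's English description precedes it below -/
import Mathlib

section
/- For every real h with 0 < h < 2π/3, the coefficients a₁ = csc(h) csc(3h/2) sin²(h/2) and a₂ = 2/(1 + 2cos h) satisfy a₂ - 2a₁ > 0; consequently 2a₁ cos θ + a₂ > 0 for every real θ. -/
open Real

/-- For `0 < h < 2π/3`, the B-spline collocation coefficients
`a₁ = csc h · csc(3h/2) · sin²(h/2)` and `a₂ = 2/(1 + 2 cos h)` satisfy
`a₂ - 2 a₁ > 0`; consequently `2 a₁ cos θ + a₂ > 0` for every real `θ`. -/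
theorem symbol_identity_pos (h : ℝ) (h0 : 0 < h) (h1 : h < 2 * π / 3)
    (a₁ a₂ : ℝ)
    (ha₁ : a₁ = (1 / Real.sin h) * (1 / Real.sin (3 * h / 2)) * Real.sin (h / 2) ^ 2)
    (ha₂ : a₂ = 2 / (1 + 2 * Real.cos h)) :
    0 < a₂ - 2 * a₁ ∧ ∀ θ : ℝ, 0 < 2 * a₁ * Real.cos θ + a₂ := by
  have hpi : (0:ℝ) < π := Real.pi_pos
  have hlt : h < π := by linarith
  have hs : 0 < Real.sin (h / 2) := Real.sin_pos_of_pos_of_lt_pi (by linarith) (by linarith)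
  have hc : 1/2 < Real.cos (h / 2) := by
    have := Real.cos_lt_cos_of_nonneg_of_le_pi (by positivity) (by linarith [Real.pi_le_four])
      (show h/2 < π/3 by linarith)
    rwa [Real.cos_pi_div_three] at this
  have hsinh : Real.sin h = 2 * Real.sin (h/2) * Real.cos (h/2) := by
    rw [← Real.sin_two_mul]; ring_nf
  have hS3 : Real.sin (3 * h / 2) = Real.sin (h/2) * (1 + 2 * Real.cos h) := by
    have h1 : (3 : ℝ) * h / 2 = h + h / 2 := by ring
    rw [h1, Real.sin_add]
    have hcos : Real.cos h = 2 * Real.cos (h/2)^2 - 1 := by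
      have := Real.cos_sq (h/2)
      have h2 : 2 * (h/2) = h := by ring
      rw [h2] at this; linarith
    rw [hsinh, hcos]; ring
  have hS3pos : 0 < Real.sin (3 * h / 2) :=
    Real.sin_pos_of_pos_of_lt_pi (by linarith) (by linarith)
  have hd : 0 < 1 + 2 * Real.cos h := by
    by_contra hcon
    push_neg at hcon
    nlinarith [hS3pos, hS3, hs]
  have hsinhpos : 0 < Real.sin h := Real.sin_pos_of_pos_of_lt_pi h0 hlt
  have ha₁pos : 0 < a₁ := by
    rw [ha₁]; positivity
  have key : 0 < a₂ - 2 * a₁ := by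
    rw [ha₁, ha₂, hsinh, hS3]
    have hc0 : (0:ℝ) < Real.cos (h/2) := by linarith
    have e : 2 / (1 + 2 * Real.cos h) -
        2 * (1 / (2 * Real.sin (h/2) * Real.cos (h/2)) *
          (1 / (Real.sin (h/2) * (1 + 2 * Real.cos h))) * Real.sin (h/2) ^ 2)
        = (2 * Real.cos (h/2) - 1) / (Real.cos (h/2) * (1 + 2 * Real.cos h)) := by
      field_simp
    rw [e]
    exact div_pos (by linarith) (by positivity)
  refine ⟨key, fun θ => ?_⟩
  nlinarith [Real.neg_one_le_cos θ, ha₁pos]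
end

section
/- For every real h with 0 < h ≤ π/2, the coefficients a₄ = (3 + 9cos h)/(4cos(h/2) - 4cos(5h/2)) and a₅ = -3cot²(h/2)/(2 + 4cos h) satisfy a₄ > 0 and 2a₄ + a₅ ≤ 0; consequently 2a₄ cos θ + a₅ ≤ 0 for every real θ. -/
/-!
Put `s = sin (h/2)`, `c = cos (h/2)`. The product-to-sum formula gives
`cos (h/2) - cos (5h/2) = 4 s² c (3 - 4 s²)`, so `a₄ = 3 (2 - 3 s²) / (8 s² c (3 - 4 s²))`,
`a₅ = -3 c² / (2 s² (3 - 4 s²))` and `2 a₄ + a₅` has the sign of `2 - 3 s² - 2 c³`.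
That is nonpositive because `4 c⁶ - (2 - 3 s²)² = s⁴ (3 - 4 s²) ≥ 0`. As `a₄ > 0`, the symbol
`2 a₄ cos θ + a₅` is largest at `θ = 0`.
-/

open Real

lemma cos_sub_cos_five_mul (x : ℝ) :
    cos x - cos (5 * x) = 4 * sin x ^ 2 * cos x * (3 - 4 * sin x ^ 2) := by
  rw [cos_sub_cos, show (x + 5 * x) / 2 = 3 * x by ring, show (x - 5 * x) / 2 = -(2 * x) by ring,
    sin_neg, sin_three_mul, sin_two_mul]
  ring

lemma two_sub_three_mul_sin_sq_le_two_mul_cos_pow_three {x : ℝ} (hc : 0 ≤ cos x)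
    (hs : 4 * sin x ^ 2 ≤ 3) : 2 - 3 * sin x ^ 2 ≤ 2 * cos x ^ 3 := by
  have hsq : (2 - 3 * sin x ^ 2) ^ 2 ≤ (2 * cos x ^ 3) ^ 2 := by
    have hdiff : (2 * cos x ^ 3) ^ 2 - (2 - 3 * sin x ^ 2) ^ 2
        = sin x ^ 4 * (3 - 4 * sin x ^ 2) := by
      linear_combination (4 * cos x ^ 4 + 4 * cos x ^ 2 * (1 - sin x ^ 2)
        + 4 * (1 - sin x ^ 2) ^ 2) * cos_sq' x
    nlinarith [pow_nonneg (sq_nonneg (sin x)) 2]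
  exact (abs_le_of_sq_le_sq hsq (by positivity)).trans' (le_abs_self _)

lemma three_add_nine_cos_two_mul_div_eq (x : ℝ) :
    (3 + 9 * cos (2 * x)) / (4 * cos x - 4 * cos (5 * x))
      = 3 * (2 - 3 * sin x ^ 2) / (8 * sin x ^ 2 * cos x * (3 - 4 * sin x ^ 2)) := by
  rw [← mul_sub, cos_sub_cos_five_mul, cos_two_mul_eq_one_sub]
  rcases eq_or_ne (sin x) 0 with hs | hs
  · simp [hs]
  rcases eq_or_ne (cos x) 0 with hc | hc
  · simp [hc]
  field_simp
  ring

lemma neg_three_cot_sq_div_eq (x : ℝ) :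
    -(3 * (cos x / sin x) ^ 2) / (2 + 4 * cos (2 * x))
      = -(3 * cos x ^ 2) / (2 * sin x ^ 2 * (3 - 4 * sin x ^ 2)) := by
  rw [cos_two_mul_eq_one_sub, show (2 : ℝ) + 4 * (1 - 2 * sin x ^ 2) = 2 * (3 - 4 * sin x ^ 2) by ring]
  rcases eq_or_ne (sin x) 0 with hs | hs
  · simp [hs]
  field_simp

lemma two_mul_collocation_coeff_add_eq (x : ℝ) :
    2 * (3 * (2 - 3 * sin x ^ 2) / (8 * sin x ^ 2 * cos x * (3 - 4 * sin x ^ 2)))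
        + -(3 * cos x ^ 2) / (2 * sin x ^ 2 * (3 - 4 * sin x ^ 2))
      = 3 * (2 - 3 * sin x ^ 2 - 2 * cos x ^ 3) / (4 * sin x ^ 2 * cos x * (3 - 4 * sin x ^ 2)) := by
  rcases eq_or_ne (sin x) 0 with hs | hs
  · simp [hs]
  rcases eq_or_ne (cos x) 0 with hc | hc
  · simp [hc]
  rcases eq_or_ne (3 - 4 * sin x ^ 2) 0 with hd | hd
  · simp [hd]
  field_simp
  ring

/-- For `0 < h ≤ π/2`, the B-spline second-derivative coefficients
`a₄ = (3 + 9 cos h)/(4 cos(h/2) - 4 cos(5h/2))` and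
`a₅ = -3 cot²(h/2)/(2 + 4 cos h)` satisfy `a₄ > 0` and `2 a₄ + a₅ ≤ 0`;
consequently `2 a₄ cos θ + a₅ ≤ 0` for every real `θ`. -/
theorem symbol_second_deriv_nonpos (h : ℝ) (h0 : 0 < h) (h1 : h ≤ π / 2)
    (a₄ a₅ : ℝ)
    (ha₄ : a₄ = (3 + 9 * Real.cos h) / (4 * Real.cos (h / 2) - 4 * Real.cos (5 * h / 2)))
    (ha₅ : a₅ = -(3 * (Real.cos (h / 2) / Real.sin (h / 2)) ^ 2) / (2 + 4 * Real.cos h)) :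
    0 < a₄ ∧ 2 * a₄ + a₅ ≤ 0 ∧ ∀ θ : ℝ, 2 * a₄ * Real.cos θ + a₅ ≤ 0 := by
  obtain ⟨x, rfl⟩ : ∃ x, h = 2 * x := ⟨h / 2, by ring⟩
  rw [show 2 * x / 2 = x by ring, show 5 * (2 * x) / 2 = 5 * x by ring] at ha₄
  rw [show 2 * x / 2 = x by ring] at ha₅
  have hs : 0 < sin x := sin_pos_of_pos_of_lt_pi (by linarith) (by linarith [pi_pos])
  have hc : 0 < cos x := cos_pos_of_mem_Ioo ⟨by linarith [pi_pos], by linarith⟩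
  have hs_sq : 2 * sin x ^ 2 ≤ 1 := by
    linarith [cos_two_mul_eq_one_sub x, cos_nonneg_of_mem_Icc (x := 2 * x) ⟨by linarith [pi_pos], h1⟩]
  have hd : 0 < 3 - 4 * sin x ^ 2 := by linarith
  rw [three_add_nine_cos_two_mul_div_eq] at ha₄
  rw [neg_three_cot_sq_div_eq] at ha₅
  have ha₄_pos : 0 < a₄ := by
    rw [ha₄]; apply div_pos <;> [linarith; positivity]
  have hsum_nonpos : 2 * a₄ + a₅ ≤ 0 := by
    rw [ha₄, ha₅, two_mul_collocation_coeff_add_eq]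
    apply div_nonpos_of_nonpos_of_nonneg _ (by positivity)
    linarith [two_sub_three_mul_sin_sq_le_two_mul_cos_pow_three hc.le (by linarith)]
  refine ⟨ha₄_pos, hsum_nonpos, fun θ => ?_⟩
  nlinarith [cos_le_one θ]
end

section
/- Let 0 < h ≤ π/2, let α ≥ 0 (reaction coefficient) and α₀ > 0, and define a₁ = csc(h) csc(3h/2) sin²(h/2), a₂ = 2/(1 + 2cos h), a₄ = (3 + 9cos h)/(4cos(h/2) - 4cos(5h/2)), a₅ = -3cot²(h/2)/(2 + 4cos h). Then for every real β, the amplification denominator ν = 1 + (2(a₁α - a₄)cos(βh) + (a₂α - a₅)) / (α₀ (2a₁ cos(βh) + a₂)) is well defined (the denominator is nonzero) and satisfies ν ≥ 1. -/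
/-!
Write `u = cos (h / 2)` and `s = sin (h / 2)`. Half-angle formulas turn the four B-spline values
into rational functions of `u` and `s`, and with `c = cos (β h)`
`2 a₁ c + a₂ = (c + 2u) / (u (4u² - 1))` and
`2 a₄ c + a₅ = 3 ((3u² - 1) c - 2u³) / (4 s² u (4u² - 1))`.
For `0 < h ≤ π/2` we have `u² ≥ 1/2`, so the first is positive (`2u > 1 ≥ -c`) and the second
is nonpositive (`(3u² - 1) c ≤ 3u² - 1 ≤ 2u³`). The numerator of `ν - 1` is
`α (2 a₁ c + a₂) - (2 a₄ c + a₅) ≥ 0`.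
-/

open Real

namespace Real

lemma cos_eq_two_mul_cos_half_sq_sub_one (x : ℝ) : cos x = 2 * cos (x / 2) ^ 2 - 1 := by
  rw [← cos_two_mul, mul_div_cancel₀ x two_ne_zero]

lemma sin_eq_two_mul_sin_half_mul_cos_half (x : ℝ) : sin x = 2 * sin (x / 2) * cos (x / 2) := by
  rw [← sin_two_mul, mul_div_cancel₀ x two_ne_zero]

lemma sin_three_mul_half (x : ℝ) :
    sin (3 * x / 2) = sin (x / 2) * (4 * cos (x / 2) ^ 2 - 1) := by
  rw [mul_div_assoc, sin_three_mul]
  linear_combination -4 * sin (x / 2) * sin_sq_add_cos_sq (x / 2)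

lemma cos_half_sub_cos_five_mul_half (x : ℝ) :
    cos (x / 2) - cos (5 * x / 2)
      = 4 * sin (x / 2) ^ 2 * cos (x / 2) * (4 * cos (x / 2) ^ 2 - 1) := by
  rw [cos_sub_cos, show (x / 2 + 5 * x / 2) / 2 = 3 * x / 2 by ring,
    show (x / 2 - 5 * x / 2) / 2 = -x by ring, sin_neg, sin_three_mul_half,
    sin_eq_two_mul_sin_half_mul_cos_half x]
  ring

lemma half_le_cos_half_sq {x : ℝ} (h0 : -(π / 2) ≤ x) (h1 : x ≤ π / 2) :
    1 / 2 ≤ cos (x / 2) ^ 2 := by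
  have := cos_nonneg_of_mem_Icc ⟨h0, h1⟩
  rw [cos_eq_two_mul_cos_half_sq_sub_one x] at this
  linarith

end Real

lemma trigBSpline_adjacent_eq {x : ℝ} (hs : sin (x / 2) ≠ 0) :
    1 / sin x * (1 / sin (3 * x / 2)) * sin (x / 2) ^ 2
      = 1 / (2 * cos (x / 2) * (4 * cos (x / 2) ^ 2 - 1)) := by
  rw [sin_eq_two_mul_sin_half_mul_cos_half x, sin_three_mul_half]
  field_simp

lemma trigBSpline_center_eq (x : ℝ) :
    2 / (1 + 2 * cos x) = 2 / (4 * cos (x / 2) ^ 2 - 1) := by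
  rw [cos_eq_two_mul_cos_half_sq_sub_one x]
  ring_nf

lemma trigBSpline_deriv2_adjacent_eq (x : ℝ) :
    (3 + 9 * cos x) / (4 * cos (x / 2) - 4 * cos (5 * x / 2))
      = 3 * (3 * cos (x / 2) ^ 2 - 1)
        / (8 * sin (x / 2) ^ 2 * cos (x / 2) * (4 * cos (x / 2) ^ 2 - 1)) := by
  rw [← mul_sub, cos_half_sub_cos_five_mul_half, cos_eq_two_mul_cos_half_sq_sub_one x]
  generalize cos (x / 2) = u
  generalize sin (x / 2) = s
  rw [show 3 + 9 * (2 * u ^ 2 - 1) = 2 * (3 * (3 * u ^ 2 - 1)) by ring,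
    show 4 * (4 * s ^ 2 * u * (4 * u ^ 2 - 1)) = 2 * (8 * s ^ 2 * u * (4 * u ^ 2 - 1)) by ring,
    mul_div_mul_left _ _ (two_ne_zero' ℝ)]

lemma trigBSpline_deriv2_center_eq (x : ℝ) :
    -(3 * (cos (x / 2) / sin (x / 2)) ^ 2) / (2 + 4 * cos x)
      = -(3 * cos (x / 2) ^ 2) / (2 * sin (x / 2) ^ 2 * (4 * cos (x / 2) ^ 2 - 1)) := by
  rw [cos_eq_two_mul_cos_half_sq_sub_one x]
  generalize cos (x / 2) = u
  generalize sin (x / 2) = s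
  rw [div_pow, mul_div_assoc', neg_div, neg_div, div_div]
  congr 1
  ring

section ClosedForms

variable {u s c : ℝ}

lemma trigBSpline_symbol_pos (hu : 1 / 2 < u) (hc : -1 ≤ c) :
    0 < 2 * (1 / (2 * u * (4 * u ^ 2 - 1))) * c + 2 / (4 * u ^ 2 - 1) := by
  have hq : 0 < 4 * u ^ 2 - 1 := by nlinarith
  have hcu : 0 < c + 2 * u := by linarith
  have hform : 2 * (1 / (2 * u * (4 * u ^ 2 - 1))) * c + 2 / (4 * u ^ 2 - 1)
      = (c + 2 * u) / (u * (4 * u ^ 2 - 1)) := by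
    field_simp
  rw [hform]
  positivity

lemma trigBSpline_deriv2_symbol_nonpos (hu : 0 < u) (hu3 : 1 ≤ 3 * u ^ 2) (hs : s ≠ 0)
    (hc : c ≤ 1) :
    2 * (3 * (3 * u ^ 2 - 1) / (8 * s ^ 2 * u * (4 * u ^ 2 - 1))) * c
      + -(3 * u ^ 2) / (2 * s ^ 2 * (4 * u ^ 2 - 1)) ≤ 0 := by
  have hq : 0 < 4 * u ^ 2 - 1 := by linarith
  have hform : 2 * (3 * (3 * u ^ 2 - 1) / (8 * s ^ 2 * u * (4 * u ^ 2 - 1))) * c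
      + -(3 * u ^ 2) / (2 * s ^ 2 * (4 * u ^ 2 - 1))
      = 3 * ((3 * u ^ 2 - 1) * c - 2 * u ^ 3) / (4 * s ^ 2 * u * (4 * u ^ 2 - 1)) := by
    field_simp
    ring
  rw [hform]
  apply div_nonpos_of_nonpos_of_nonneg _ (by positivity)
  have hcu : (3 * u ^ 2 - 1) * c ≤ 3 * u ^ 2 - 1 := mul_le_of_le_one_right (by linarith) hc
  -- 2u³ - 3u² + 1 = (u - 1)²(2u + 1)
  nlinarith [sq_nonneg (u - 1)]

end ClosedForms

/-- For `0 < h ≤ π/2`, reaction coefficient `α ≥ 0` and `α₀ > 0`, the amplification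
denominator `ν = 1 + (2(a₁α - a₄)cos(βh) + (a₂α - a₅)) / (α₀(2a₁cos(βh) + a₂))` of the
cubic trigonometric B-spline collocation scheme is well defined (its denominator is
nonzero) and satisfies `ν ≥ 1` for every real `β`. -/
theorem nu_ge_one (h : ℝ) (h0 : 0 < h) (h1 : h ≤ π / 2)
    (α α₀ : ℝ) (hα : 0 ≤ α) (hα₀ : 0 < α₀)
    (a₁ a₂ a₄ a₅ : ℝ)
    (ha₁ : a₁ = (1 / Real.sin h) * (1 / Real.sin (3 * h / 2)) * Real.sin (h / 2) ^ 2)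
    (ha₂ : a₂ = 2 / (1 + 2 * Real.cos h))
    (ha₄ : a₄ = (3 + 9 * Real.cos h) / (4 * Real.cos (h / 2) - 4 * Real.cos (5 * h / 2)))
    (ha₅ : a₅ = -(3 * (Real.cos (h / 2) / Real.sin (h / 2)) ^ 2) / (2 + 4 * Real.cos h)) :
    ∀ β : ℝ,
      α₀ * (2 * a₁ * Real.cos (β * h) + a₂) ≠ 0 ∧
      1 ≤ 1 + (2 * (a₁ * α - a₄) * Real.cos (β * h) + (a₂ * α - a₅)) /
            (α₀ * (2 * a₁ * Real.cos (β * h) + a₂)) := by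
  intro β
  have hs : sin (h / 2) ≠ 0 := (sin_pos_of_pos_of_lt_pi (half_pos h0) (by linarith [pi_pos])).ne'
  have hu : 0 < cos (h / 2) := cos_pos_of_mem_Ioo ⟨by linarith [pi_pos], by linarith [pi_pos]⟩
  have hu2 : 1 / 2 ≤ cos (h / 2) ^ 2 := half_le_cos_half_sq (by linarith [pi_pos]) h1
  have hD : 0 < 2 * a₁ * cos (β * h) + a₂ := by
    rw [ha₁, ha₂, trigBSpline_adjacent_eq hs, trigBSpline_center_eq]
    exact trigBSpline_symbol_pos (by nlinarith) (neg_one_le_cos _)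
  have hN : 2 * a₄ * cos (β * h) + a₅ ≤ 0 := by
    rw [ha₄, ha₅, trigBSpline_deriv2_adjacent_eq, trigBSpline_deriv2_center_eq]
    exact trigBSpline_deriv2_symbol_nonpos hu (by linarith) hs (cos_le_one _)
  have hα₀D := mul_pos hα₀ hD
  refine ⟨hα₀D.ne', le_add_of_nonneg_right (div_nonneg ?_ hα₀D.le)⟩
  linarith [mul_nonneg hα hD.le]
end
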